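/- Let X be a separable (equivalently, Lindelöf) metric space. If every countable family of closed balls B(xᵢ,rᵢ), i ∈ ℕ, with d(xᵢ,xⱼ) ≤ rᵢ + rⱼ for all i, j has nonempty intersection, then every (arbitrary, possibly uncountable) family of closed balls satisfying the same pairwise condition has nonempty intersection; that is, X is hyperconvex. -/

import Mathlib

/-- In a separable metric space, if every countable family of closed balls
satisfying the pairwise condition has nonempty intersection, then every
family of closed balls satisfying the pairwise condition has nonempty
intersection; that is, the space is hyperconvex. -/
theorem hyperconvex_of_countable_ball_intersection
    {X : Type*} [MetricSpace X] [TopologicalSpace.SeparableSpace X]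
    (hcount : ∀ (x : ℕ → X) (r : ℕ → ℝ), (∀ n, 0 ≤ r n) →
      (∀ i j, dist (x i) (x j) ≤ r i + r j) →
      (⋂ i, Metric.closedBall (x i) (r i)).Nonempty) :
    ∀ (I : Type) [Nonempty I] (x : I → X) (r : I → ℝ), (∀ i, 0 ≤ r i) →
      (∀ i j, dist (x i) (x j) ≤ r i + r j) →
      (⋂ i, Metric.closedBall (x i) (r i)).Nonempty := by
  intro I _ x r hr hd
  -- A separable metric space is second countable, hence hereditarily Lindelöf.
  obtain ⟨k, hk⟩ := eq_closed_inter_nat (fun i ↦ Metric.closedBall (x i) (r i))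
    fun _ ↦ Metric.isClosed_closedBall
  rw [← hk]
  exact hcount (x ∘ k) (r ∘ k) (fun n ↦ hr (k n)) fun i j ↦ hd (k i) (k j)
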